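/- There exists a probability measure p on ℝ × ℝ, a black box B : ℝ × ℝ → {0,1}, and an explanation E : ℝ × ℝ → {0,1} such that E depends only on the first coordinate (the desired feature), B depends only on the second coordinate (the prohibited feature), B and E are not identically constant on the support of p, and yet the relative error of E with respect to B under p is zero, i.e. L(E, B) = 0 (equivalently, E has perfect fidelity 1 − L(E,B) = 1). Concretely one may take p to be the pushforward of the standard Gaussian on ℝ under x ↦ (x, x), B((x₁,x₂)) = 𝟙[x₂ ≥ 0], and E((x₁,x₂)) = 𝟙[x₁ ≥ 0]. -/

import Mathlib

/-!
Under the push-forward of the standard Gaussian along `x ↦ (x, x)` the two features agree almost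
surely, so the sign of the desired feature coincides almost everywhere with the sign of the
prohibited one. Since the Gaussian charges every open set, the whole diagonal lies in the support,
where both signs occur.
-/

open MeasureTheory

/-- The support of a measure `p` on a topological space: the set of points all of whose
neighborhoods have positive measure. -/
def measureSupport {X : Type*} [TopologicalSpace X] [MeasurableSpace X]
    (p : Measure X) : Set X :=
  {x | ∀ U ∈ nhds x, p U ≠ 0}

open Classical in
/-- Relative error `L(F, F') = E_{x ∼ p}[𝟙[F x ≠ F' x]]` under the 0-1 loss. -/
noncomputable def relativeError {X Y : Type*} [MeasurableSpace X]
    (p : Measure X) (F F' : X → Y) : ℝ :=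
  ∫ x, (if F x ≠ F' x then (1 : ℝ) else 0) ∂p

open ProbabilityTheory

section MeasureSupport

variable {X Y : Type*} [TopologicalSpace X] [MeasurableSpace X]

theorem measureSupport_eq_univ (μ : Measure X) [μ.IsOpenPosMeasure] :
    measureSupport μ = Set.univ :=
  Set.eq_univ_of_forall fun _ _ hU => (μ.measure_pos_of_mem_nhds hU).ne'

theorem image_measureSupport_subset_measureSupport_map [TopologicalSpace Y] [MeasurableSpace Y]
    {μ : Measure X} {f : X → Y} (hf : Continuous f) (hfm : AEMeasurable f μ) :
    f '' measureSupport μ ⊆ measureSupport (μ.map f) := by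
  rintro _ ⟨x, hx, rfl⟩ U hU
  exact ((pos_iff_ne_zero.2 (hx _ (hf.continuousAt.preimage_mem_nhds hU))).trans_le
    (Measure.le_map_apply hfm U)).ne'

end MeasureSupport

theorem not_exists_forall_eq_of_mem_of_ne {X Y : Type*} {s : Set X} {f : X → Y} {x y : X}
    (hx : x ∈ s) (hy : y ∈ s) (hxy : f x ≠ f y) : ¬ ∃ c, ∀ z ∈ s, f z = c :=
  fun ⟨_, hc⟩ => hxy ((hc x hx).trans (hc y hy).symm)

theorem relativeError_eq_zero_of_ae_eq {X Y : Type*} [MeasurableSpace X] {p : Measure X}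
    {F F' : X → Y} (h : F =ᵐ[p] F') : relativeError p F F' = 0 :=
  integral_eq_zero_of_ae <| h.mono fun x hx => by simp [hx]

theorem ae_fst_eq_snd_map_diag {α : Type*} [MeasurableSpace α] [MeasurableEq α]
    (μ : Measure α) : ∀ᵐ z ∂μ.map (fun x => (x, x)), z.1 = z.2 :=
  (ae_map_iff (by fun_prop) measurableSet_diagonal).2 (ae_of_all _ fun _ => rfl)

theorem isOpenPosMeasure_gaussianReal (m : ℝ) {v : NNReal} (hv : v ≠ 0) :
    (gaussianReal m v).IsOpenPosMeasure :=
  (gaussianReal_absolutelyContinuous' m hv).isOpenPosMeasure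

/-- Theorem 1 (existence of potentially misleading explanations with perfect fidelity):
there exist a probability measure `p` on `ℝ × ℝ`, a black box `B : ℝ × ℝ → {0,1}` and an
explanation `E : ℝ × ℝ → {0,1}` such that `E` depends only on the first coordinate (the
desired feature), `B` depends only on the second coordinate (the prohibited feature),
neither `B` nor `E` is identically constant on the support of `p`, and yet `L(E, B) = 0`
(i.e. `E` has perfect fidelity `1 − L(E, B) = 1`). -/
theorem exists_misleading_explanation_perfect_fidelity :
    ∃ (p : Measure (ℝ × ℝ)) (B E : ℝ × ℝ → Bool),
      IsProbabilityMeasure p ∧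
      (∀ x x' : ℝ × ℝ, x.1 = x'.1 → E x = E x') ∧
      (∀ x x' : ℝ × ℝ, x.2 = x'.2 → B x = B x') ∧
      (¬ ∃ c : Bool, ∀ x ∈ measureSupport p, B x = c) ∧
      (¬ ∃ c : Bool, ∀ x ∈ measureSupport p, E x = c) ∧
      relativeError p E B = 0 := by
  have := isOpenPosMeasure_gaussianReal 0 one_ne_zero
  set p := (gaussianReal 0 1).map fun x : ℝ => (x, x)
  have hdiag_mem : ∀ t : ℝ, (t, t) ∈ measureSupport p := fun t =>
    image_measureSupport_subset_measureSupport_map (by fun_prop) (by fun_prop)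
      ⟨t, by simp [measureSupport_eq_univ], rfl⟩
  refine ⟨p, fun x => decide (0 ≤ x.2), fun x => decide (0 ≤ x.1),
    Measure.isProbabilityMeasure_map (by fun_prop), fun x x' h => by simp [h],
    fun x x' h => by simp [h], ?_, ?_, ?_⟩
  · exact not_exists_forall_eq_of_mem_of_ne (hdiag_mem 1) (hdiag_mem (-1)) (by norm_num)
  · exact not_exists_forall_eq_of_mem_of_ne (hdiag_mem 1) (hdiag_mem (-1)) (by norm_num)
  · exact relativeError_eq_zero_of_ae_eq <|
      (ae_fst_eq_snd_map_diag _).mono fun z hz => by simp [hz]
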